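/- arXiv:1705.07261 — 2 statements merged into one kernel-verified Lean document; each statement's English description precedes it below -/
import Mathlib

section
/- Consider one inner loop of SARAH (SARAH-IN). Suppose each f_i is L-smooth. Then the iterates satisfy: the sum over t = 0,...,m of E[||∇P(w_t)||²] is at most (2/η)[P(w_0) − P(w_*)] + Σ_{t=0}^{m} E[||∇P(w_t) − v_t||²] − (1 − Lη) Σ_{t=0}^{m} E[||v_t||²], where w_* is a global minimizer of P. -/
/-!
Along any sample path the iterates are inexact gradient steps `w_{t+1} = w_t - η v_t`. Since `∇P`
is `L`-Lipschitz, the descent lemma together with the polarization identity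
`2⟪∇P w, v⟫ = ‖∇P w‖² + ‖v‖² - ‖∇P w - v‖²` gives
`P(w_{t+1}) ≤ P(w_t) - η/2 ‖∇P(w_t)‖² + η/2 ‖∇P(w_t) - v_t‖² - η/2 (1 - Lη) ‖v_t‖²`.
Summing over `t` telescopes, `P(w_{m+1}) ≥ P(w_*)`, and the resulting pathwise bound survives
taking expectations because it is linear in the three sums.
-/

open scoped BigOperators

noncomputable section

/-- Vectors in `ℝ^d`. -/
abbrev Vec (d : ℕ) := EuclideanSpace ℝ (Fin d)

/-- The type of mini-batches of size `b` from `{1,…,n}` (modeled as `Fin n`). -/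
def Batch (n b : ℕ) : Type := {s : Finset (Fin n) // s.card = b}

instance (n b : ℕ) : Fintype (Batch n b) :=
  inferInstanceAs (Fintype {s : Finset (Fin n) // s.card = b})

/-- Expectation (uniform average) over a finite sample space. -/
def expec {Ω : Type*} [Fintype Ω] (F : Ω → ℝ) : ℝ :=
  (Fintype.card Ω : ℝ)⁻¹ * ∑ ω, F ω

/-- The SARAH-IN state `(w_t, v_t)` given a starting point `w0`, a learning rate `η`,
a batch size `b` and a sequence of mini-batches `I` (where `I t` is the batch used to
form `v_t`, for `t ≥ 1`). -/
def sarahState {d n : ℕ} (f : Fin n → Vec d → ℝ) (w0 : Vec d) (η : ℝ) (b : ℕ)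
    (I : ℕ → Finset (Fin n)) : ℕ → Vec d × Vec d
  | 0 => (w0, (n : ℝ)⁻¹ • ∑ i, gradient (f i) w0)
  | t + 1 =>
    let p := sarahState f w0 η b I t
    let w' := p.1 - η • p.2
    (w', (b : ℝ)⁻¹ • ∑ i ∈ I (t + 1), (gradient (f i) w' - gradient (f i) p.1) + p.2)

/-- Extend a finite sequence of mini-batches to all of `ℕ` (indices `≥ T` are irrelevant). -/
def pad {n b T : ℕ} (ω : Fin T → Batch n b) : ℕ → Finset (Fin n) :=
  fun t => if h : t < T then (ω ⟨t, h⟩).1 else ∅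

open Finset
open scoped Gradient RealInnerProductSpace

lemma expec_eq_expect {Ω : Type*} [Fintype Ω] (F : Ω → ℝ) : expec F = 𝔼 ω, F ω := by
  rw [expec, expect_eq_sum_div_card, card_univ, div_eq_inv_mul]

lemma sum_expec_le_of_forall_le {Ω : Type*} [Fintype Ω] [Nonempty Ω] (s : Finset ℕ)
    {A B C : ℕ → Ω → ℝ} {a k : ℝ}
    (h : ∀ ω, ∑ t ∈ s, A t ω ≤ a + ∑ t ∈ s, B t ω - k * ∑ t ∈ s, C t ω) :
    ∑ t ∈ s, expec (A t) ≤ a + ∑ t ∈ s, expec (B t) - k * ∑ t ∈ s, expec (C t) := by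
  simp only [expec_eq_expect, ← expect_sum_comm]
  calc 𝔼 ω, ∑ t ∈ s, A t ω
      ≤ 𝔼 ω, (a + ∑ t ∈ s, B t ω - k * ∑ t ∈ s, C t ω) := expect_le_expect fun ω _ => h ω
    _ = _ := by rw [expect_sub_distrib, expect_add_distrib, Fintype.expect_const, ← mul_expect]

lemma Batch.nonempty {n b : ℕ} (h : b ≤ n) : Nonempty (Batch n b) :=
  let ⟨s, _, hs⟩ := exists_subset_card_eq (s := (univ : Finset (Fin n))) (by simpa using h)
  ⟨⟨s, hs⟩⟩

section LipschitzGradient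

variable {F : Type*} [NormedAddCommGroup F] [InnerProductSpace ℝ F] [CompleteSpace F]
  {P : F → ℝ} {L : ℝ}

theorem hasDerivAt_comp_add_smul (hP : Differentiable ℝ P) (x c : F) (s : ℝ) :
    HasDerivAt (fun s : ℝ => P (x + s • c)) ⟪∇ P (x + s • c), c⟫ s := by
  rw [inner_gradient_left]
  have hline : HasDerivAt (fun s : ℝ => x + s • c) c s := by
    simpa using ((hasDerivAt_id s).smul_const c).const_add x
  exact (hP _).hasFDerivAt.comp_hasDerivAt s hline

theorem le_add_inner_add_of_lipschitz_gradient (hP : Differentiable ℝ P)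
    (hlip : ∀ x y, ‖∇ P x - ∇ P y‖ ≤ L * ‖x - y‖) (x y : F) :
    P y ≤ P x + ⟪∇ P x, y - x⟫ + L / 2 * ‖y - x‖ ^ 2 := by
  set c := y - x with hc
  -- `φ' ≤ 0` on `(0, 1)` by Cauchy–Schwarz and the Lipschitz bound, and `φ 1 ≤ φ 0` is the claim.
  let φ : ℝ → ℝ := fun s => P (x + s • c) - s * ⟪∇ P x, c⟫ - L / 2 * s ^ 2 * ‖c‖ ^ 2
  have hφ : ∀ s, HasDerivAt φ (⟪∇ P (x + s • c) - ∇ P x, c⟫ - L * s * ‖c‖ ^ 2) s := by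
    intro s
    refine (((hasDerivAt_comp_add_smul hP x c s).sub
      ((hasDerivAt_id s).mul_const ⟪∇ P x, c⟫)).sub
      (((hasDerivAt_pow 2 s).const_mul (L / 2)).mul_const (‖c‖ ^ 2))).congr_deriv ?_
    simp only [inner_sub_left, Nat.cast_ofNat, one_mul]
    ring
  have hφ_nonpos : ∀ s ∈ Set.Ioo (0 : ℝ) 1,
      ⟪∇ P (x + s • c) - ∇ P x, c⟫ - L * s * ‖c‖ ^ 2 ≤ 0 := by
    intro s hs
    rw [sub_nonpos]
    calc ⟪∇ P (x + s • c) - ∇ P x, c⟫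
        ≤ ‖∇ P (x + s • c) - ∇ P x‖ * ‖c‖ := real_inner_le_norm _ _
      _ ≤ L * ‖s • c‖ * ‖c‖ := by gcongr; simpa using hlip (x + s • c) x
      _ = L * s * ‖c‖ ^ 2 := by rw [norm_smul, Real.norm_of_nonneg hs.1.le]; ring
  have hanti : AntitoneOn φ (Set.Icc 0 1) :=
    antitoneOn_of_hasDerivWithinAt_nonpos (convex_Icc 0 1)
      (fun s _ => (hφ s).continuousAt.continuousWithinAt)
      (fun s _ => (hφ s).hasDerivWithinAt) (by simpa only [interior_Icc] using hφ_nonpos)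
  have := hanti (Set.left_mem_Icc.2 zero_le_one) (Set.right_mem_Icc.2 zero_le_one) zero_le_one
  simp only [φ, hc, zero_smul, add_zero, one_smul, add_sub_cancel, zero_mul, sub_zero,
    one_mul, ne_eq, OfNat.ofNat_ne_zero, not_false_eq_true, zero_pow, mul_zero, one_pow] at this
  linarith

theorem apply_sub_smul_le_of_lipschitz_gradient (hP : Differentiable ℝ P)
    (hlip : ∀ x y, ‖∇ P x - ∇ P y‖ ≤ L * ‖x - y‖) (w v : F) (η : ℝ) :
    P (w - η • v) ≤ P w - η / 2 * ‖∇ P w‖ ^ 2 + η / 2 * ‖∇ P w - v‖ ^ 2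
      - η / 2 * (1 - L * η) * ‖v‖ ^ 2 := by
  have hdescent := le_add_inner_add_of_lipschitz_gradient hP hlip w (w - η • v)
  rw [sub_sub_cancel_left, inner_neg_right, real_inner_smul_right, norm_neg, norm_smul,
    mul_pow, Real.norm_eq_abs, sq_abs] at hdescent
  linear_combination hdescent - η / 2 * norm_sub_sq_real (∇ P w) v

theorem sum_norm_gradient_sq_le (hP : Differentiable ℝ P)
    (hlip : ∀ x y, ‖∇ P x - ∇ P y‖ ≤ L * ‖x - y‖) {η : ℝ} (hη : 0 < η) {w v : ℕ → F}
    (hw : ∀ t, w (t + 1) = w t - η • v t) {c : ℝ} (hc : ∀ x, c ≤ P x) (m : ℕ) :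
    ∑ t ∈ range (m + 1), ‖∇ P (w t)‖ ^ 2
      ≤ 2 / η * (P (w 0) - c) + ∑ t ∈ range (m + 1), ‖∇ P (w t) - v t‖ ^ 2
        - (1 - L * η) * ∑ t ∈ range (m + 1), ‖v t‖ ^ 2 := by
  have hstep : ∀ t, ‖∇ P (w t)‖ ^ 2 ≤ 2 / η * (P (w t) - P (w (t + 1)))
      + ‖∇ P (w t) - v t‖ ^ 2 - (1 - L * η) * ‖v t‖ ^ 2 := by
    intro t
    have := apply_sub_smul_le_of_lipschitz_gradient hP hlip (w t) (v t) η
    rw [hw t, div_mul_eq_mul_div, ← sub_nonneg]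
    field_simp
    linarith
  calc ∑ t ∈ range (m + 1), ‖∇ P (w t)‖ ^ 2
      ≤ ∑ t ∈ range (m + 1), (2 / η * (P (w t) - P (w (t + 1)))
          + ‖∇ P (w t) - v t‖ ^ 2 - (1 - L * η) * ‖v t‖ ^ 2) := sum_le_sum fun t _ => hstep t
    _ = 2 / η * (P (w 0) - P (w (m + 1))) + ∑ t ∈ range (m + 1), ‖∇ P (w t) - v t‖ ^ 2
          - (1 - L * η) * ∑ t ∈ range (m + 1), ‖v t‖ ^ 2 := by
      rw [sum_sub_distrib, sum_add_distrib, ← mul_sum, ← mul_sum,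
        sum_range_sub' (fun t => P (w t))]
    _ ≤ _ := by gcongr; exact hc _

theorem hasGradientAt_const_mul_sum {ι : Type*} (s : Finset ι) {f : ι → F → ℝ} {x : F}
    (hf : ∀ i ∈ s, DifferentiableAt ℝ (f i) x) (a : ℝ) :
    HasGradientAt (fun w => a * ∑ i ∈ s, f i w) (a • ∑ i ∈ s, ∇ (f i) x) x := by
  rw [hasGradientAt_iff_hasFDerivAt, map_smul, map_sum]
  simp only [toDual_gradient]
  exact (HasFDerivAt.fun_sum fun i hi => (hf i hi).hasFDerivAt).const_mul a

theorem norm_gradient_average_sub_le {n : ℕ} (hn : n ≠ 0) {f : Fin n → F → ℝ}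
    (hf : ∀ i, Differentiable ℝ (f i))
    (hlip : ∀ i x y, ‖∇ (f i) x - ∇ (f i) y‖ ≤ L * ‖x - y‖) (x y : F) :
    ‖∇ (fun w => (n : ℝ)⁻¹ * ∑ i, f i w) x - ∇ (fun w => (n : ℝ)⁻¹ * ∑ i, f i w) y‖
      ≤ L * ‖x - y‖ := by
  have hgrad (z : F) := (hasGradientAt_const_mul_sum univ (fun i _ => hf i z) (n : ℝ)⁻¹).gradient
  rw [hgrad, hgrad, ← smul_sub, ← sum_sub_distrib, norm_smul, norm_inv, Real.norm_natCast]
  calc (n : ℝ)⁻¹ * ‖∑ i, (∇ (f i) x - ∇ (f i) y)‖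
      ≤ (n : ℝ)⁻¹ * ∑ i : Fin n, L * ‖x - y‖ := by
        gcongr
        exact (norm_sum_le _ _).trans (sum_le_sum fun i _ => hlip i x y)
    _ = L * ‖x - y‖ := by
      rw [sum_const, card_univ, Fintype.card_fin, nsmul_eq_mul, inv_mul_cancel_left₀]
      exact_mod_cast hn

end LipschitzGradient

theorem sarah_in_sum_grad_bound_general
    {d n : ℕ} (hn : 1 ≤ n)
    (f : Fin n → Vec d → ℝ) (L : ℝ)
    (hdiff : ∀ i, Differentiable ℝ (f i))
    (hsmooth : ∀ i (w w' : Vec d),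
      ‖gradient (f i) w - gradient (f i) w'‖ ≤ L * ‖w - w'‖)
    (P : Vec d → ℝ) (hP : P = fun w => (n : ℝ)⁻¹ * ∑ i, f i w)
    (wstar : Vec d) (hmin : ∀ w, P wstar ≤ P w)
    (w0 : Vec d) (η : ℝ) (hη : 0 < η) (b m : ℕ) (hbn : b ≤ n) :
    ∑ t ∈ Finset.range (m + 1),
        expec (fun ω : Fin (m + 1) → Batch n b =>
          ‖gradient P ((sarahState f w0 η b (pad ω) t).1)‖ ^ 2)
      ≤ 2 / η * (P w0 - P wstar)
        + ∑ t ∈ Finset.range (m + 1),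
            expec (fun ω : Fin (m + 1) → Batch n b =>
              ‖gradient P ((sarahState f w0 η b (pad ω) t).1)
                - (sarahState f w0 η b (pad ω) t).2‖ ^ 2)
        - (1 - L * η) * ∑ t ∈ Finset.range (m + 1),
            expec (fun ω : Fin (m + 1) → Batch n b =>
              ‖(sarahState f w0 η b (pad ω) t).2‖ ^ 2) := by
  subst hP
  have hPd : Differentiable ℝ fun w => (n : ℝ)⁻¹ * ∑ i, f i w := fun x =>
    (hasGradientAt_const_mul_sum univ (fun i _ => hdiff i x) _).differentiableAt
  have hlipP := norm_gradient_average_sub_le (by omega) hdiff hsmooth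
  have := Batch.nonempty hbn
  exact sum_expec_le_of_forall_le _ fun ω =>
    sum_norm_gradient_sq_le hPd hlipP hη (fun t => rfl) hmin m

/-- **Lemma 1 of SARAH (nonconvex).** One inner loop of SARAH with `L`-smooth components:
`∑_{t=0}^m E‖∇P(w_t)‖² ≤ (2/η)(P(w₀) − P(w⋆)) + ∑_{t=0}^m E‖∇P(w_t) − v_t‖²
  − (1 − Lη) ∑_{t=0}^m E‖v_t‖²`. -/
theorem sarah_in_sum_grad_bound
    {d n : ℕ} (hn : 1 ≤ n)
    (f : Fin n → Vec d → ℝ) (L : ℝ) (hL : 0 < L)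
    (hdiff : ∀ i, Differentiable ℝ (f i))
    (hsmooth : ∀ i (w w' : Vec d),
      ‖gradient (f i) w - gradient (f i) w'‖ ≤ L * ‖w - w'‖)
    (P : Vec d → ℝ) (hP : P = fun w => (n : ℝ)⁻¹ * ∑ i, f i w)
    (wstar : Vec d) (hmin : ∀ w, P wstar ≤ P w)
    (w0 : Vec d) (η : ℝ) (hη : 0 < η) (b m : ℕ) (hb : 1 ≤ b) (hbn : b ≤ n) :
    ∑ t ∈ Finset.range (m + 1),
        expec (fun ω : Fin (m + 1) → Batch n b =>
          ‖gradient P ((sarahState f w0 η b (pad ω) t).1)‖ ^ 2)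
      ≤ 2 / η * (P w0 - P wstar)
        + ∑ t ∈ Finset.range (m + 1),
            expec (fun ω : Fin (m + 1) → Batch n b =>
              ‖gradient P ((sarahState f w0 η b (pad ω) t).1)
                - (sarahState f w0 η b (pad ω) t).2‖ ^ 2)
        - (1 - L * η) * ∑ t ∈ Finset.range (m + 1),
            expec (fun ω : Fin (m + 1) → Batch n b =>
              ‖(sarahState f w0 η b (pad ω) t).2‖ ^ 2) :=
  sarah_in_sum_grad_bound_general hn f L hdiff hsmooth P hP wstar hmin w0 η hη b m hbn
end
end

section
/- Consider one inner loop of SARAH (SARAH-IN) with each f_i L-smooth. For any t ≥ 1, E[||∇P(w_t) − v_t||²] = Σ_{j=1}^{t} E[||v_j − v_{j−1}||²] − Σ_{j=1}^{t} E[||∇P(w_j) − ∇P(w_{j−1})||²]. -/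
open scoped BigOperators

noncomputable section

open Finset InnerProductSpace

/-!
Write `e_j = ∇P(w_j) - v_j`, so that `e_0 = 0`. Given the batches before step `j`, the update
`v_j - v_{j-1}` is the average over a uniformly random `b`-subset of the increments
`∇f_i(w_j) - ∇f_i(w_{j-1})`; since every index lies in the same number `C(n-1, b-1)` of
`b`-subsets, its conditional mean is `∇P(w_j) - ∇P(w_{j-1})`. Hence `e_j` is `e_{j-1}` plus a
centred term, and expanding the square gives
`E‖e_j‖² = E‖e_{j-1}‖² + E‖v_j - v_{j-1}‖² - E‖∇P(w_j) - ∇P(w_{j-1})‖²`,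
which telescopes.
-/

theorem card_filter_mem_powersetCard_succ {α : Type*} [DecidableEq α] {s : Finset α} {a : α}
    (ha : a ∈ s) (k : ℕ) :
    #{t ∈ s.powersetCard (k + 1) | a ∈ t} = (#s - 1).choose k := by
  obtain ⟨u, hau, rfl⟩ : ∃ u, a ∉ u ∧ s = insert a u :=
    ⟨s.erase a, notMem_erase a s, (insert_erase ha).symm⟩
  have hinj : Set.InjOn (insert a) (u.powersetCard k : Set (Finset α)) :=
    fun t ht t' ht' htt' => by
      have hat : a ∉ t := fun h => hau ((mem_powersetCard.1 ht).1 h)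
      have hat' : a ∉ t' := fun h => hau ((mem_powersetCard.1 ht').1 h)
      rw [← erase_insert hat, htt', erase_insert hat']
  rw [powersetCard_succ_insert hau, filter_union,
    filter_false_of_mem fun t ht hat => hau ((mem_powersetCard.1 ht).1 hat), empty_union,
    filter_true_of_mem fun t ht => by
      obtain ⟨t', -, rfl⟩ := mem_image.1 ht; exact mem_insert_self a t', card_image_of_injOn hinj,
    card_powersetCard, card_insert_of_notMem hau, Nat.add_sub_cancel]

theorem Batch.card_eq_choose (n b : ℕ) : Fintype.card (Batch n b) = n.choose b := by
  show Fintype.card {s : Finset (Fin n) // #s = b} = _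
  rw [Fintype.card_finset_len, Fintype.card_fin]

theorem Batch.sum_sum_eq_choose_smul {E : Type*} [AddCommMonoid E] {n k : ℕ} (g : Fin n → E) :
    ∑ x : Batch n (k + 1), ∑ i ∈ x.1, g i = (n - 1).choose k • ∑ i, g i := by
  show ∑ x : {s : Finset (Fin n) // #s = k + 1}, ∑ i ∈ x.1, g i = _
  rw [← sum_subtype _ (fun s => mem_powersetCard_univ) (fun s => ∑ i ∈ s, g i),
    sum_comm' (t' := univ) (s' := fun i => {s ∈ univ.powersetCard (k + 1) | i ∈ s})
      (fun s i => by simp), smul_sum]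
  refine sum_congr rfl fun i _ => ?_
  rw [sum_const, card_filter_mem_powersetCard_succ (mem_univ i), card_univ, Fintype.card_fin]

theorem Batch.sum_average {E : Type*} [AddCommGroup E] [Module ℝ E] {n b : ℕ} (hb : 0 < b)
    (g : Fin n → E) :
    ∑ x : Batch n b, (b : ℝ)⁻¹ • ∑ i ∈ x.1, g i
      = Fintype.card (Batch n b) • (n : ℝ)⁻¹ • ∑ i, g i := by
  obtain ⟨k, rfl⟩ : ∃ k, b = k + 1 := ⟨b - 1, by omega⟩
  rw [← smul_sum, Batch.sum_sum_eq_choose_smul, Batch.card_eq_choose, ← Nat.cast_smul_eq_nsmul ℝ,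
    ← Nat.cast_smul_eq_nsmul ℝ, smul_smul, smul_smul]
  rcases n with _ | m
  · simp
  have h : ((m + 1 : ℕ) : ℝ) * m.choose k = (m + 1).choose (k + 1) * (k + 1 : ℕ) := by
    exact_mod_cast Nat.add_one_mul_choose_eq m k
  rw [Nat.add_sub_cancel]
  congr 1
  field_simp
  linear_combination h

theorem sum_norm_add_sub_sq_of_sum_eq {E : Type*} [NormedAddCommGroup E] [InnerProductSpace ℝ E]
    {Ω : Type*} [Fintype Ω] (p a : E) (X : Ω → E) (h : ∑ ω, X ω = Fintype.card Ω • a) :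
    ∑ ω, ‖p + a - X ω‖ ^ 2 = ∑ ω, (‖p‖ ^ 2 + ‖X ω‖ ^ 2 - ‖a‖ ^ 2) := by
  have hpoint : ∀ ω, ‖p + a - X ω‖ ^ 2
      = (‖p‖ ^ 2 + ‖X ω‖ ^ 2 - ‖a‖ ^ 2) + 2 * inner ℝ (p + a) (a - X ω) := fun ω => by
    rw [norm_sub_sq_real, norm_add_sq_real, inner_sub_right]
    simp only [inner_add_left, real_inner_self_eq_norm_sq]
    ring
  have hcentered : ∑ ω, inner ℝ (p + a) (a - X ω) = 0 := by
    rw [← inner_sum, sum_sub_distrib, h, sum_const, card_univ, sub_self, inner_zero_right]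
  rw [sum_congr rfl fun ω _ => hpoint ω, sum_add_distrib, ← mul_sum, hcentered, mul_zero,
    add_zero]

theorem gradient_const_mul_sum {E : Type*} [NormedAddCommGroup E] [InnerProductSpace ℝ E]
    [CompleteSpace E] {ι : Type*} (s : Finset ι) (f : ι → E → ℝ) (c : ℝ) {x : E}
    (hf : ∀ i ∈ s, DifferentiableAt ℝ (f i) x) :
    gradient (fun w => c * ∑ i ∈ s, f i w) x = c • ∑ i ∈ s, gradient (f i) x := by
  refine HasGradientAt.gradient (hasGradientAt_iff_hasFDerivAt.2 ?_)
  rw [map_smul, map_sum]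
  exact (HasFDerivAt.fun_sum fun i hi => (hf i hi).hasGradientAt.hasFDerivAt).const_mul c

theorem Fintype.sum_eq_sum_of_sum_update_eq {ι α M : Type*} [Fintype ι] [DecidableEq ι]
    [Fintype α] [AddCommMonoid M] (j : ι) {F G : (ι → α) → M}
    (h : ∀ ω, ∑ x, F (Function.update ω j x) = ∑ x, G (Function.update ω j x)) :
    ∑ ω, F ω = ∑ ω, G ω := by
  rcases isEmpty_or_nonempty α with hα | ⟨⟨x₀⟩⟩
  · have : IsEmpty (ι → α) := ⟨fun ω => hα.false (ω j)⟩
    simp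
  let e := Equiv.funSplitAt j α
  have hsplit : ∀ x r, e.symm (x, r) = Function.update (e.symm (x₀, r)) j x := fun x r => by
    ext k
    by_cases hk : k = j
    · subst hk; simp [e]
    · simp [e, hk]
  simp only [← e.symm.sum_comp, Fintype.sum_prod_type_right]
  exact Finset.sum_congr rfl fun r _ => by
    simpa only [← hsplit] using h (e.symm (x₀, r))

theorem eq_sum_Icc_sub_sum_Icc_of_succ {M : Type*} [AddCommGroup M] {e a c : ℕ → M} {t : ℕ}
    (h0 : e 0 = 0) (hsucc : ∀ j < t, e (j + 1) = e j + a (j + 1) - c (j + 1)) :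
    e t = ∑ j ∈ Icc 1 t, a j - ∑ j ∈ Icc 1 t, c j := by
  induction t with
  | zero => simpa using h0
  | succ t ih =>
    rw [hsucc t t.lt_add_one, ih fun j hj => hsucc j (hj.trans t.lt_add_one),
      sum_Icc_succ_top (Nat.le_add_left 1 t), sum_Icc_succ_top (Nat.le_add_left 1 t)]
    abel

section Sarah

variable {d n : ℕ} (f : Fin n → Vec d → ℝ) (w0 : Vec d) (η : ℝ) (b : ℕ)

theorem sarahState_congr {I I' : ℕ → Finset (Fin n)} {t : ℕ} (h : ∀ k ≤ t, I k = I' k) :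
    sarahState f w0 η b I t = sarahState f w0 η b I' t := by
  induction t with
  | zero => rfl
  | succ t ih =>
    rw [sarahState, sarahState, ih fun k hk => h k (hk.trans t.le_succ), h (t + 1) le_rfl]

theorem sarahState_update_of_lt (I : ℕ → Finset (Fin n)) (s : Finset (Fin n)) {m t : ℕ}
    (ht : t < m) :
    sarahState f w0 η b (Function.update I m s) t = sarahState f w0 η b I t :=
  sarahState_congr f w0 η b fun k hk => Function.update_of_ne (show k ≠ m by omega) s I

theorem pad_update {T : ℕ} (ω : Fin T → Batch n b) (j : Fin T) (x : Batch n b) :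
    pad (Function.update ω j x) = Function.update (pad ω) j x.1 := by
  funext k
  by_cases hkj : k = j
  · subst hkj; simp [pad]
  · have hne : ∀ hk : k < T, (⟨k, hk⟩ : Fin T) ≠ j := fun hk h => hkj (by rw [← h])
    simp [pad, Function.update_of_ne hkj, hne]

theorem sum_sarah_error_succ (hb : 0 < b) (P : Vec d → ℝ)
    (hgradP : ∀ w, gradient P w = (n : ℝ)⁻¹ • ∑ i, gradient (f i) w) {T j : ℕ} (hj : j + 1 < T) :
    ∑ ω : Fin T → Batch n b,
        ‖gradient P (sarahState f w0 η b (pad ω) (j + 1)).1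
          - (sarahState f w0 η b (pad ω) (j + 1)).2‖ ^ 2
      = ∑ ω : Fin T → Batch n b,
          ‖gradient P (sarahState f w0 η b (pad ω) j).1 - (sarahState f w0 η b (pad ω) j).2‖ ^ 2
        + ∑ ω : Fin T → Batch n b,
          ‖(sarahState f w0 η b (pad ω) (j + 1)).2 - (sarahState f w0 η b (pad ω) j).2‖ ^ 2
        - ∑ ω : Fin T → Batch n b,
          ‖gradient P (sarahState f w0 η b (pad ω) (j + 1)).1
            - gradient P (sarahState f w0 η b (pad ω) j).1‖ ^ 2 := by
  rw [← sum_add_distrib, ← sum_sub_distrib]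
  refine Fintype.sum_eq_sum_of_sum_update_eq ⟨j + 1, hj⟩ fun ω => ?_
  simp only [pad_update]
  set I := pad ω
  set w := (sarahState f w0 η b I j).1
  set v := (sarahState f w0 η b I j).2
  set w' := w - η • v
  set g : Fin n → Vec d := fun i => gradient (f i) w' - gradient (f i) w
  have hprev : ∀ s, sarahState f w0 η b (Function.update I (j + 1) s) j = (w, v) := fun s =>
    sarahState_update_of_lt f w0 η b I s j.lt_succ_self
  have hnext : ∀ s, sarahState f w0 η b (Function.update I (j + 1) s) (j + 1)
      = (w', (b : ℝ)⁻¹ • ∑ i ∈ s, g i + v) := fun s => by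
    rw [sarahState, hprev, Function.update_self]
  have hdrift : gradient P w' - gradient P w = (n : ℝ)⁻¹ • ∑ i, g i := by
    rw [hgradP, hgradP, ← smul_sub, ← sum_sub_distrib]
  have hsplit : ∀ x : Batch n b, gradient P w' - ((b : ℝ)⁻¹ • ∑ i ∈ x.1, g i + v)
      = (gradient P w - v) + (gradient P w' - gradient P w) - (b : ℝ)⁻¹ • ∑ i ∈ x.1, g i :=
    fun x => by abel
  simp only [hprev, hnext, add_sub_cancel_right, hsplit]
  exact sum_norm_add_sub_sq_of_sum_eq _ _ _ (hdrift ▸ Batch.sum_average hb g)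

end Sarah

theorem sarah_in_variance_decomposition_general
    {d n : ℕ}
    (f : Fin n → Vec d → ℝ)
    (hdiff : ∀ i, Differentiable ℝ (f i))
    (P : Vec d → ℝ) (hP : P = fun w => (n : ℝ)⁻¹ * ∑ i, f i w)
    (w0 : Vec d) (η : ℝ) (b : ℕ) (hb : 1 ≤ b)
    (t : ℕ) :
    expec (fun ω : Fin (t + 1) → Batch n b =>
        ‖gradient P ((sarahState f w0 η b (pad ω) t).1)
          - (sarahState f w0 η b (pad ω) t).2‖ ^ 2)
      = ∑ j ∈ Finset.Icc 1 t,
          expec (fun ω : Fin (t + 1) → Batch n b =>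
            ‖(sarahState f w0 η b (pad ω) j).2
              - (sarahState f w0 η b (pad ω) (j - 1)).2‖ ^ 2)
        - ∑ j ∈ Finset.Icc 1 t,
            expec (fun ω : Fin (t + 1) → Batch n b =>
              ‖gradient P ((sarahState f w0 η b (pad ω) j).1)
                - gradient P ((sarahState f w0 η b (pad ω) (j - 1)).1)‖ ^ 2) := by
  have hgradP : ∀ w, gradient P w = (n : ℝ)⁻¹ • ∑ i, gradient (f i) w := fun w => by
    subst hP
    exact gradient_const_mul_sum _ _ _ fun i _ => (hdiff i).differentiableAt
  simp only [expec, ← mul_sum, ← mul_sub]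
  congr 1
  refine eq_sum_Icc_sub_sum_Icc_of_succ (e := fun m => ∑ ω : Fin (t + 1) → Batch n b,
      ‖gradient P (sarahState f w0 η b (pad ω) m).1 - (sarahState f w0 η b (pad ω) m).2‖ ^ 2)
    ?_ fun j hj => ?_
  · simp [sarahState, hgradP]
  · simpa only [Nat.add_sub_cancel] using
      sum_sarah_error_succ f w0 η b hb P hgradP (by omega : j + 1 < t + 1)

/-- **Lemma 2 of SARAH (nonconvex).** For any `t ≥ 1`,
`E‖∇P(w_t) − v_t‖² = ∑_{j=1}^t E‖v_j − v_{j−1}‖² − ∑_{j=1}^t E‖∇P(w_j) − ∇P(w_{j−1})‖²`. -/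
theorem sarah_in_variance_decomposition
    {d n : ℕ} (hn : 1 ≤ n)
    (f : Fin n → Vec d → ℝ) (L : ℝ) (hL : 0 < L)
    (hdiff : ∀ i, Differentiable ℝ (f i))
    (hsmooth : ∀ i (w w' : Vec d),
      ‖gradient (f i) w - gradient (f i) w'‖ ≤ L * ‖w - w'‖)
    (P : Vec d → ℝ) (hP : P = fun w => (n : ℝ)⁻¹ * ∑ i, f i w)
    (w0 : Vec d) (η : ℝ) (hη : 0 < η) (b : ℕ) (hb : 1 ≤ b) (hbn : b ≤ n)
    (t : ℕ) (ht : 1 ≤ t) :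
    expec (fun ω : Fin (t + 1) → Batch n b =>
        ‖gradient P ((sarahState f w0 η b (pad ω) t).1)
          - (sarahState f w0 η b (pad ω) t).2‖ ^ 2)
      = ∑ j ∈ Finset.Icc 1 t,
          expec (fun ω : Fin (t + 1) → Batch n b =>
            ‖(sarahState f w0 η b (pad ω) j).2
              - (sarahState f w0 η b (pad ω) (j - 1)).2‖ ^ 2)
        - ∑ j ∈ Finset.Icc 1 t,
            expec (fun ω : Fin (t + 1) → Batch n b =>
              ‖gradient P ((sarahState f w0 η b (pad ω) j).1)
                - gradient P ((sarahState f w0 η b (pad ω) (j - 1)).1)‖ ^ 2) :=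
  sarah_in_variance_decomposition_general f hdiff P hP w0 η b hb t
end
end
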